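/- arXiv:2602.15225 — 3 statements merged into one kernel-verified Lean document; each statement's English description precedes it below -/
import Mathlib

section
/- In a position-optimization game where each target y (Q-almost surely) has a unique closest position x*(y), if player i plays a pseudo-target x_i ∈ X* and k(x_i) denotes the number of players at x_i, then u_i(x_i, x_{-i}) ≥ P(x_i)/k(x_i), where P(x) = Q({y : x*(y) = x}). Moreover equality holds if every pseudo-target in X* is occupied by at least one player. -/
open Finset
open scoped ENNReal Classical

noncomputable def closestSet {X Y : Type*} {n : ℕ} (d : X → Y → ℝ≥0∞) (xs : Fin n → X)
    (y : Y) : Finset (Fin n) :=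
  Finset.univ.filter fun i => ∀ j, d (xs i) y ≤ d (xs j) y

/-- Player `i`'s share of target `y`: `1/|X_min|` if `i` is among the closest players, else 0. -/
noncomputable def share {X Y : Type*} {n : ℕ} (d : X → Y → ℝ≥0∞) (xs : Fin n → X) (y : Y)
    (i : Fin n) : ℝ :=
  if i ∈ closestSet d xs y then ((closestSet d xs y).card : ℝ)⁻¹ else 0

/-- Player `i`'s expected utility `E_{y∼Q}[π_i]`. -/
noncomputable def utility {X Y : Type*} [Fintype Y] {n : ℕ} (d : X → Y → ℝ≥0∞) (Q : Y → ℝ)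
    (xs : Fin n → X) (i : Fin n) : ℝ :=
  ∑ y, Q y * share d xs y i

/-- The projection `P` of `Q` onto pseudo-targets: `P x = Q({y : x*(y) = x})`. -/
noncomputable def projP {X Y : Type*} [Fintype Y] (Q : Y → ℝ) (xstar : Y → X) (x : X) : ℝ :=
  ∑ y ∈ Finset.univ.filter (fun y => xstar y = x), Q y

/-- Number of players playing position `x`. -/
noncomputable def kcount {X : Type*} {n : ℕ} (xs : Fin n → X) (x : X) : ℕ :=
  (Finset.univ.filter (fun i => xs i = x)).card

lemma closest_eq {X Y : Type*} {n : ℕ} (d : X → Y → ℝ≥0∞) (xs : Fin n → X)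
    (xstar : Y → X) (y : Y)
    (hmin : ∀ x', d (xstar y) y ≤ d x' y)
    (huniq : ∀ x', d x' y ≤ d (xstar y) y → x' = xstar y)
    (j0 : Fin n) (hj0 : xs j0 = xstar y) :
    closestSet d xs y = Finset.univ.filter (fun j => xs j = xstar y) := by
  ext j
  simp only [closestSet, Finset.mem_filter, Finset.mem_univ, true_and]
  constructor
  · intro h
    exact huniq _ ((h j0).trans (le_of_eq (by rw [hj0])))
  · intro h k
    rw [h]; exact hmin _

lemma share_nonneg {X Y : Type*} {n : ℕ} (d : X → Y → ℝ≥0∞) (xs : Fin n → X) (y : Y)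
    (i : Fin n) : 0 ≤ share d xs y i := by
  unfold share
  split <;> positivity

/-- a player on a pseudo-target `x_i` gets utility at least `P(x_i)/k(x_i)`,
with equality if every pseudo-target is occupied. -/
theorem utility_on_pseudotarget {X Y : Type*} [Fintype Y] {n : ℕ} (hn : 0 < n)
    (d : X → Y → ℝ≥0∞) (Q : Y → ℝ) (hQ : ∀ y, 0 ≤ Q y) (hQsum : ∑ y, Q y = 1)
    (xstar : Y → X)
    (hmin : ∀ y x', d (xstar y) y ≤ d x' y)
    (huniq : ∀ y, Q y ≠ 0 → ∀ x', d x' y ≤ d (xstar y) y → x' = xstar y)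
    (xs : Fin n → X) (i : Fin n) (hx : xs i ∈ Set.range xstar) :
    projP Q xstar (xs i) / (kcount xs (xs i) : ℝ) ≤ utility d Q xs i ∧
    ((∀ x ∈ Set.range xstar, ∃ j, xs j = x) →
      utility d Q xs i = projP Q xstar (xs i) / (kcount xs (xs i) : ℝ)) := by
  set S : Finset Y := Finset.univ.filter (fun y => xstar y = xs i) with hS
  -- on S, Q y * share = Q y * k⁻¹
  have key : ∀ y ∈ S, Q y * share d xs y i = Q y * ((kcount xs (xs i) : ℝ))⁻¹ := by
    intro y hy
    rw [hS, Finset.mem_filter] at hy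
    rcases eq_or_ne (Q y) 0 with h0 | h0
    · simp [h0]
    · have hcl : closestSet d xs y = Finset.univ.filter (fun j => xs j = xstar y) :=
        closest_eq d xs xstar y (hmin y) (huniq y h0) i hy.2.symm
      have hmem : i ∈ closestSet d xs y := by
        rw [hcl]; simp [hy.2.symm]
      have hcard : (closestSet d xs y).card = kcount xs (xs i) := by
        rw [hcl, kcount, hy.2]
      rw [share, if_pos hmem, hcard]
  have hsumS : ∑ y ∈ S, Q y * share d xs y i
      = projP Q xstar (xs i) / (kcount xs (xs i) : ℝ) := by
    rw [Finset.sum_congr rfl key, ← Finset.sum_mul, projP, div_eq_mul_inv]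
  have hsplit : utility d Q xs i = (∑ y ∈ S, Q y * share d xs y i)
      + ∑ y ∈ Sᶜ, Q y * share d xs y i := by
    rw [utility, ← Finset.sum_add_sum_compl S]
  constructor
  · rw [hsplit, hsumS]
    have : 0 ≤ ∑ y ∈ Sᶜ, Q y * share d xs y i :=
      Finset.sum_nonneg fun y _ => mul_nonneg (hQ y) (share_nonneg d xs y i)
    linarith
  · intro hocc
    rw [hsplit, hsumS]
    have hz : ∑ y ∈ Sᶜ, Q y * share d xs y i = 0 := by
      apply Finset.sum_eq_zero
      intro y hy
      rw [Finset.mem_compl, hS, Finset.mem_filter] at hy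
      rcases eq_or_ne (Q y) 0 with h0 | h0
      · simp [h0]
      · obtain ⟨j, hj⟩ := hocc (xstar y) ⟨y, rfl⟩
        have hcl : closestSet d xs y = Finset.univ.filter (fun j => xs j = xstar y) :=
          closest_eq d xs xstar y (hmin y) (huniq y h0) j hj
        have : i ∉ closestSet d xs y := by
          rw [hcl]
          simp only [Finset.mem_filter, Finset.mem_univ, true_and]
          intro h
          exact hy (by simp [h])
        rw [share, if_neg this, mul_zero]
    rw [hz, add_zero]
end

section
/- In a position-optimization game with n > 1/p_0, where p_0 = min_{x∈X*} P(x), every pure Nash equilibrium is extreme (all players play positions in X*) and covers X* (every pseudo-target has at least one player). -/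
open Finset
open scoped ENNReal Classical

/-- Pure Nash equilibrium: no unilateral pure deviation strictly improves utility. -/
def IsPureNash {X Y : Type*} [Fintype Y] {n : ℕ} (d : X → Y → ℝ≥0∞) (Q : Y → ℝ)
    (xs : Fin n → X) : Prop :=
  ∀ (i : Fin n) (x' : X), utility d Q (Function.update xs i x') i ≤ utility d Q xs i

lemma closestSet_nonempty {X Y : Type*} {n : ℕ} (hn : 0 < n) (d : X → Y → ℝ≥0∞)
    (xs : Fin n → X) (y : Y) : (closestSet d xs y).Nonempty := by
  have : Nonempty (Fin n) := Fin.pos_iff_nonempty.mp hn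
  obtain ⟨i, -, hi⟩ := Finset.exists_min_image Finset.univ (fun j => d (xs j) y)
    Finset.univ_nonempty
  exact ⟨i, Finset.mem_filter.mpr ⟨Finset.mem_univ _, fun j => hi j (Finset.mem_univ j)⟩⟩

lemma sum_share {X Y : Type*} {n : ℕ} (hn : 0 < n) (d : X → Y → ℝ≥0∞) (xs : Fin n → X)
    (y : Y) : ∑ i, share d xs y i = 1 := by
  have hne := closestSet_nonempty hn d xs y
  have hcard : ((closestSet d xs y).card : ℝ) ≠ 0 := by
    exact_mod_cast Finset.card_ne_zero.mpr hne
  unfold share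
  rw [Finset.sum_ite_mem, Finset.univ_inter, Finset.sum_const, nsmul_eq_mul,
    mul_inv_cancel₀ hcard]

lemma sum_utility {X Y : Type*} [Fintype Y] {n : ℕ} (hn : 0 < n) (d : X → Y → ℝ≥0∞)
    (Q : Y → ℝ) (hQsum : ∑ y, Q y = 1) (xs : Fin n → X) :
    ∑ i, utility d Q xs i = 1 := by
  unfold utility
  rw [Finset.sum_comm]
  calc ∑ y, ∑ i, Q y * share d xs y i
      = ∑ y, Q y * ∑ i, share d xs y i := by
        simp [Finset.mul_sum]
    _ = 1 := by
        simp only [sum_share hn d xs, mul_one]; exact hQsum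

/-- for `n > 1/p₀`, every pure Nash equilibrium is extreme and covers `X*`. -/
theorem pure_nash_extreme_and_covers {X Y : Type*} [Fintype Y] {n : ℕ}
    (d : X → Y → ℝ≥0∞) (Q : Y → ℝ) (hQ : ∀ y, 0 ≤ Q y) (hQsum : ∑ y, Q y = 1)
    (xstar : Y → X)
    (hmin : ∀ y x', d (xstar y) y ≤ d x' y)
    (huniq : ∀ y, Q y ≠ 0 → ∀ x', d x' y ≤ d (xstar y) y → x' = xstar y)
    (p0 : ℝ) (hp0pos : 0 < p0)
    (hp0le : ∀ y, p0 ≤ projP Q xstar (xstar y))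
    (hp0mem : ∃ y, projP Q xstar (xstar y) = p0)
    (hn : 1 / p0 < n)
    (xs : Fin n → X) (hnash : IsPureNash d Q xs) :
    (∀ i, xs i ∈ Set.range xstar) ∧ (∀ x ∈ Set.range xstar, ∃ i, xs i = x) := by
  have hnpos : 0 < n := by
    by_contra h
    push_neg at h
    interval_cases n
    have : (0:ℝ) < 1 / p0 := by positivity
    simpa using this.trans hn
  have hninv : (1:ℝ)/n < p0 := by
    rw [div_lt_iff₀ (by positivity)] at hn ⊢
    · rw [mul_comm]; exact hn
  -- Part 2: coverage
  have cover : ∀ x ∈ Set.range xstar, ∃ i, xs i = x := by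
    rintro x ⟨y0, rfl⟩
    by_contra huncov
    push_neg at huncov
    set x : X := xstar y0 with hx
    -- some player has utility ≤ 1/n
    have : Nonempty (Fin n) := Fin.pos_iff_nonempty.mp hnpos
    obtain ⟨i, -, hi⟩ : ∃ i ∈ Finset.univ, utility d Q xs i ≤ 1/n := by
      apply Finset.exists_le_of_sum_le (Finset.univ_nonempty)
      rw [sum_utility hnpos d Q hQsum xs, Finset.sum_const, nsmul_eq_mul]
      rw [Finset.card_univ, Fintype.card_fin, mul_one_div,
        div_self (by positivity : (n:ℝ) ≠ 0)]
    -- deviating to x gives utility ≥ projP Q xstar x ≥ p0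
    set ys := Function.update xs i x with hys
    have hkey : ∀ y, xstar y = x → Q y ≠ 0 → closestSet d ys y = {i} := by
      intro y hxy hQy
      ext j
      simp only [closestSet, Finset.mem_filter, Finset.mem_univ, true_and,
        Finset.mem_singleton]
      constructor
      · intro hj
        by_contra hji
        have hysj : ys j = xs j := Function.update_of_ne hji x xs
        have hle : d (xs j) y ≤ d (xstar y) y := by
          have := hj i
          rw [hysj] at this
          simpa [hys, Function.update_self, hxy] using this
        exact huncov j ((huniq y hQy (xs j) hle).trans hxy)
      · rintro rfl
        intro k
        have : ys j = xstar y := by simp [hys, Function.update_self, hxy]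
        rw [this]
        exact hmin y _
    have hdev : projP Q xstar x ≤ utility d Q ys i := by
      unfold utility projP
      calc ∑ y ∈ Finset.univ.filter (fun y => xstar y = x), Q y
          = ∑ y ∈ Finset.univ.filter (fun y => xstar y = x), Q y * share d ys y i := by
            apply Finset.sum_congr rfl
            intro y hy
            rw [Finset.mem_filter] at hy
            by_cases hQy : Q y = 0
            · simp [hQy]
            · have := hkey y hy.2 hQy
              unfold share
              rw [this]
              simp
        _ ≤ ∑ y, Q y * share d ys y i := by
            apply Finset.sum_le_sum_of_subset_of_nonneg (Finset.filter_subset _ _)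
            intro y _ _
            exact mul_nonneg (hQ y) (share_nonneg d ys y i)
    have : p0 ≤ utility d Q xs i := by
      calc p0 ≤ projP Q xstar x := hp0le y0
        _ ≤ utility d Q ys i := hdev
        _ ≤ utility d Q xs i := hnash i x
    have : p0 ≤ 1/n := this.trans hi
    exact absurd hninv (not_lt.mpr this)
  refine ⟨?_, cover⟩
  -- Part 1: extremeness
  intro i
  by_contra hout
  -- utility of i is 0
  have hu0 : utility d Q xs i = 0 := by
    unfold utility
    apply Finset.sum_eq_zero
    intro y _
    by_cases hQy : Q y = 0
    · simp [hQy]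
    · obtain ⟨j, hj⟩ := cover (xstar y) ⟨y, rfl⟩
      have hnotmem : i ∉ closestSet d xs y := by
        simp only [closestSet, Finset.mem_filter, Finset.mem_univ, true_and]
        push_neg
        refine ⟨j, ?_⟩
        rw [hj]
        by_contra hle
        push_neg at hle
        exact hout ⟨y, (huniq y hQy (xs i) hle).symm⟩
      simp [share, hnotmem]
  -- but i can deviate and get positive utility
  obtain ⟨y', hQy'⟩ : ∃ y', Q y' ≠ 0 := by
    by_contra h
    push_neg at h
    rw [Finset.sum_eq_zero (fun y _ => h y)] at hQsum
    exact one_ne_zero hQsum.symm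
  set ys := Function.update xs i (xstar y') with hys
  have hmem : i ∈ closestSet d ys y' := by
    simp only [closestSet, Finset.mem_filter, Finset.mem_univ, true_and]
    intro j
    rw [hys, Function.update_self]
    exact hmin y' _
  have hpos : 0 < utility d Q ys i := by
    unfold utility
    apply Finset.sum_pos' (fun y _ => mul_nonneg (hQ y) (share_nonneg d ys y i))
    refine ⟨y', Finset.mem_univ _, ?_⟩
    apply mul_pos (lt_of_le_of_ne (hQ y') (Ne.symm hQy'))
    rw [share, if_pos hmem]
    have : 0 < (closestSet d ys y').card := Finset.card_pos.mpr ⟨i, hmem⟩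
    positivity
  have := hnash i (xstar y')
  rw [hu0] at this
  exact absurd (hpos.trans_le this) (lt_irrefl 0)
end

section
/- Assume n ≥ 1/c > 2/p_0. In any pure Nash equilibrium x of a position-optimization game, every pseudo-target x ∈ X* is played by at least ⌊cn⌋ players. -/
open Finset
open scoped ENNReal Classical

/-- If some player stands at the globally optimal position for `y` (with `Q y ≠ 0`), then the
closest set is exactly the set of players at that position. -/
lemma closestSet_eq_filter {X Y : Type*} {n : ℕ} (d : X → Y → ℝ≥0∞) (xs : Fin n → X)
    (Q : Y → ℝ) (xstar : Y → X)
    (hmin : ∀ y x', d (xstar y) y ≤ d x' y)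
    (huniq : ∀ y, Q y ≠ 0 → ∀ x', d x' y ≤ d (xstar y) y → x' = xstar y)
    (y : Y) (hQy : Q y ≠ 0) (i : Fin n) (hi : xs i = xstar y) :
    closestSet d xs y = Finset.univ.filter (fun j => xs j = xstar y) := by
  ext j
  simp only [closestSet, Finset.mem_filter, Finset.mem_univ, true_and]
  constructor
  · intro h
    exact huniq y hQy _ ((h i).trans (le_of_eq (by rw [hi])))
  · intro h j'
    rw [h]; exact hmin y _

/-- Lower bound on utility: a player at position `x` gets at least `P(x)/k(x)`. -/
lemma utility_lower {X Y : Type*} [Fintype Y] {n : ℕ} (d : X → Y → ℝ≥0∞) (Q : Y → ℝ)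
    (hQ : ∀ y, 0 ≤ Q y) (xstar : Y → X)
    (hmin : ∀ y x', d (xstar y) y ≤ d x' y)
    (huniq : ∀ y, Q y ≠ 0 → ∀ x', d x' y ≤ d (xstar y) y → x' = xstar y)
    (xs : Fin n → X) (i : Fin n) (x : X) (hix : xs i = x) :
    projP Q xstar x / (kcount xs x : ℝ) ≤ utility d Q xs i := by
  have hterm : ∀ y ∈ Finset.univ.filter (fun y => xstar y = x),
      Q y * ((kcount xs x : ℝ))⁻¹ = Q y * share d xs y i := by
    intro y hy
    rw [Finset.mem_filter] at hy
    by_cases hQy : Q y = 0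
    · simp [hQy]
    · have hcl := closestSet_eq_filter d xs Q xstar hmin huniq y hQy i (by rw [hix, hy.2])
      have hmem : i ∈ closestSet d xs y := by
        rw [hcl, Finset.mem_filter]
        exact ⟨Finset.mem_univ i, by rw [hix, hy.2]⟩
      unfold share
      rw [if_pos hmem, hcl]
      unfold kcount
      rw [hy.2]
  calc projP Q xstar x / (kcount xs x : ℝ)
      = ∑ y ∈ Finset.univ.filter (fun y => xstar y = x), Q y * ((kcount xs x : ℝ))⁻¹ := by
        rw [projP, div_eq_mul_inv, Finset.sum_mul]
    _ = ∑ y ∈ Finset.univ.filter (fun y => xstar y = x), Q y * share d xs y i :=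
        Finset.sum_congr rfl hterm
    _ ≤ ∑ y, Q y * share d xs y i := by
        apply Finset.sum_le_sum_of_subset_of_nonneg (Finset.filter_subset _ _)
        intro y _ _
        exact mul_nonneg (hQ y) (share_nonneg d xs y i)

lemma kcount_update {X : Type*} {n : ℕ} (xs : Fin n → X) (i : Fin n) (x : X)
    (h : xs i ≠ x) : kcount (Function.update xs i x) x = kcount xs x + 1 := by
  unfold kcount
  have hset : Finset.univ.filter (fun j => Function.update xs i x j = x)
      = insert i (Finset.univ.filter (fun j => xs j = x)) := by
    ext j
    by_cases hj : j = i <;> simp [hj, Function.update_apply, h]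
  rw [hset, Finset.card_insert_of_notMem (by simp [h])]

/-- if `n ≥ 1/c > 2/p₀`, every pseudo-target is played by at least `⌊cn⌋` players
in any pure Nash equilibrium. -/
theorem pure_nash_floor_lower_bound {X Y : Type*} [Fintype Y] {n : ℕ}
    (d : X → Y → ℝ≥0∞) (Q : Y → ℝ) (hQ : ∀ y, 0 ≤ Q y) (hQsum : ∑ y, Q y = 1)
    (xstar : Y → X)
    (hmin : ∀ y x', d (xstar y) y ≤ d x' y)
    (huniq : ∀ y, Q y ≠ 0 → ∀ x', d x' y ≤ d (xstar y) y → x' = xstar y)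
    (p0 : ℝ) (hp0pos : 0 < p0)
    (hp0le : ∀ y, p0 ≤ projP Q xstar (xstar y))
    (hp0mem : ∃ y, projP Q xstar (xstar y) = p0)
    (c : ℝ) (hc : 2 / p0 < 1 / c) (hcn : 1 / c ≤ n) (hcpos : 0 < c)
    (xs : Fin n → X) (hnash : IsPureNash d Q xs) :
    ∀ x ∈ Set.range xstar, ⌊c * n⌋₊ ≤ kcount xs x := by
  rintro x ⟨y₀, rfl⟩
  by_contra hlt
  push_neg at hlt
  set x := xstar y₀ with hxdef
  set k := kcount xs x with hkdef
  -- basic numeric facts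
  have h2c : 2 * c < p0 := by
    have := (div_lt_div_iff₀ hp0pos hcpos).mp hc
    linarith
  have hnpos : 0 < n := by
    rcases Nat.eq_zero_or_pos n with hn | hn
    · exfalso
      subst hn
      have h1 : (1 : ℝ) / c ≤ 0 := by simpa using hcn
      have h2 : 0 < 1 / c := by positivity
      linarith
    · exact hn
  have hnR : (0 : ℝ) < n := by exact_mod_cast hnpos
  have hk1 : (k : ℝ) + 1 ≤ c * n := by
    have h1 : k + 1 ≤ ⌊c * n⌋₊ := hlt
    have h2 : ((k + 1 : ℕ) : ℝ) ≤ (⌊c * n⌋₊ : ℝ) := by exact_mod_cast h1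
    have h3 : ((⌊c * n⌋₊ : ℕ) : ℝ) ≤ c * n := Nat.floor_le (by positivity)
    push_cast at h2
    linarith
  have hPx : p0 ≤ projP Q xstar x := hp0le y₀
  -- a minimal-utility player
  haveI : Nonempty (Fin n) := ⟨⟨0, hnpos⟩⟩
  obtain ⟨i₀, -, hi₀⟩ : ∃ i ∈ Finset.univ, utility d Q xs i ≤ 1 / n := by
    apply Finset.exists_le_of_sum_le (Finset.univ_nonempty)
    rw [sum_utility hnpos d Q hQsum xs, Finset.sum_const]
    simp only [Finset.card_univ, Fintype.card_fin, nsmul_eq_mul]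
    rw [mul_one_div, div_self (ne_of_gt hnR)]
  -- key inequality: p0 / (k+1) ≤ 1/n
  have hkey : p0 / ((k : ℝ) + 1) ≤ 1 / n := by
    by_cases hcase : xs i₀ = x
    · have hkpos : 0 < k := by
        rw [hkdef]
        unfold kcount
        exact Finset.card_pos.2 ⟨i₀, by simp [hcase]⟩
      have hkR : (0 : ℝ) < k := by exact_mod_cast hkpos
      have h1 := utility_lower d Q hQ xstar hmin huniq xs i₀ x hcase
      rw [← hkdef] at h1
      have h2 : p0 / ((k : ℝ) + 1) ≤ p0 / (k : ℝ) := by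
        apply div_le_div_of_nonneg_left (le_of_lt hp0pos) hkR
        linarith
      have h3 : p0 / (k : ℝ) ≤ projP Q xstar x / (k : ℝ) := by gcongr
      linarith
    · set xs' := Function.update xs i₀ x with hxs'
      have hkc : kcount xs' x = k + 1 := kcount_update xs i₀ x hcase
      have h1 := utility_lower d Q hQ xstar hmin huniq xs' i₀ x (Function.update_self i₀ x xs)
      rw [hkc] at h1
      push_cast at h1
      have h2 : p0 / ((k : ℝ) + 1) ≤ projP Q xstar x / ((k : ℝ) + 1) := by
        gcongr
      have h3 := hnash i₀ x
      rw [← hxs'] at h3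
      linarith
  -- derive p0 ≤ c, contradiction with 2c < p0
  have hfin : p0 ≤ c := by
    have h1 : p0 / (c * n) ≤ p0 / ((k : ℝ) + 1) := by
      apply div_le_div_of_nonneg_left (le_of_lt hp0pos) (by positivity) hk1
    have h2 : p0 / (c * n) ≤ 1 / n := le_trans h1 hkey
    have := (div_le_div_iff₀ (by positivity : (0:ℝ) < c * n) hnR).mp h2
    nlinarith [this]
  linarith
end
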